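/- arXiv:2106.12572 — 2 statements merged into one kernel-verified Lean document; each statement's English description precedes it below -/
import Mathlib

section
/- Let X be a finite set of points in ℂ with node polynomial ℓ_X(z) = ∏_{x∈X}(z−x), let O be analytic on an open set containing X ∪ {z} for some z ∉ X, and let 𝒞 be a simple closed positively oriented contour in the region of analyticity of O encircling X and z. Then O(z) − I_X O(z) = (1/2πi) ∮_𝒞 [ℓ_X(z)/ℓ_X(ξ)] · O(ξ)/(ξ−z) dξ, where I_X O is the unique polynomial of degree |X|−1 interpolating O on X. -/
open scoped Real

open Polynomial Finset Metric in
/-- Partial fraction identity underlying the Hermite formula. -/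
lemma hermite_pf_identity (X : Finset ℂ) (z ξ : ℂ)
    (hξX : ∀ x ∈ X, ξ ≠ x) (hξz : ξ ≠ z) :
    (∏ x ∈ X, (z - x)) / (∏ x ∈ X, (ξ - x)) * (ξ - z)⁻¹
      = (ξ - z)⁻¹ - ∑ x ∈ X, (Lagrange.basis X id x).eval z * (ξ - x)⁻¹ := by
  classical
  rcases X.eq_empty_or_nonempty with rfl | hne
  · simp
  set ℓ : ℂ[X] := Lagrange.nodal X id with hℓ
  have hℓz : ℓ.eval z = ∏ x ∈ X, (z - x) := by simp [hℓ, Lagrange.eval_nodal]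
  have hℓξ : ℓ.eval ξ = ∏ x ∈ X, (ξ - x) := by simp [hℓ, Lagrange.eval_nodal]
  have hℓξ0 : ℓ.eval ξ ≠ 0 := by
    rw [hℓξ]
    exact Finset.prod_ne_zero_iff.2 fun x hx => sub_ne_zero.2 (hξX x hx)
  set q : ℂ[X] := ℓ /ₘ (Polynomial.X - C ξ) with hq
  have hdiv : C (ℓ.eval ξ) + (Polynomial.X - C ξ) * q = ℓ := by
    have := Polynomial.modByMonic_add_div ℓ (Polynomial.X - C ξ)
    rwa [Polynomial.modByMonic_X_sub_C_eq_C_eval] at this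
  have heval : ∀ w : ℂ, ℓ.eval w = ℓ.eval ξ + (w - ξ) * q.eval w := by
    intro w
    conv_lhs => rw [← hdiv]
    simp [mul_comm]
  have hdeg : q.degree < (X.card : ℕ) := by
    have h1 : q.degree < ℓ.degree :=
      Polynomial.degree_divByMonic_lt ℓ (Polynomial.X - C ξ)
        Lagrange.nodal_ne_zero (by simp [Polynomial.degree_X_sub_C])
    rwa [Lagrange.degree_nodal] at h1
  have hqint : q = Lagrange.interpolate X id (fun x => ℓ.eval ξ / (ξ - x)) := by
    refine Lagrange.eq_interpolate_of_eval_eq _ Function.injective_id.injOn hdeg ?_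
    intro x hx
    have h0 : ℓ.eval x = 0 := Lagrange.eval_nodal_at_node (v := id) hx
    have hx' : ξ - x ≠ 0 := sub_ne_zero.2 (hξX x hx)
    have := heval x
    rw [h0] at this
    simp only [id]
    field_simp
    linear_combination this
  have hqz : q.eval z = ∑ x ∈ X, ℓ.eval ξ / (ξ - x) * (Lagrange.basis X id x).eval z := by
    rw [hqint, Lagrange.interpolate_apply, Polynomial.eval_finset_sum]
    simp
  have hqz' : (ξ - z) * q.eval z = ℓ.eval ξ - ℓ.eval z := by
    have := heval z
    linear_combination this
  -- now derive the identity
  have hsum : (ξ - z) * ∑ x ∈ X, ℓ.eval ξ / (ξ - x) * (Lagrange.basis X id x).eval z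
      = ℓ.eval ξ - ℓ.eval z := by rw [← hqz, hqz']
  rw [← hℓz, ← hℓξ]
  have hξz' : ξ - z ≠ 0 := sub_ne_zero.2 hξz
  have hterm : ∀ x ∈ X, (Lagrange.basis X id x).eval z * (ξ - x)⁻¹
      = (ℓ.eval ξ)⁻¹ * (ℓ.eval ξ / (ξ - x) * (Lagrange.basis X id x).eval z) := by
    intro x hx
    have hx' : ξ - x ≠ 0 := sub_ne_zero.2 (hξX x hx)
    field_simp
    try ring
  rw [Finset.sum_congr rfl hterm, ← Finset.mul_sum]
  have h2 : ∑ x ∈ X, ℓ.eval ξ / (ξ - x) * (Lagrange.basis X id x).eval z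
      = (ℓ.eval ξ - ℓ.eval z) / (ξ - z) := by
    rw [eq_div_iff hξz']
    linear_combination hsum
  rw [h2]
  field_simp
  try ring

/-- Circle integral of a finite sum is the sum of circle integrals. -/
lemma circleIntegral_finset_sum {ι : Type*} (s : Finset ι) (f : ι → ℂ → ℂ) (c : ℂ) (R : ℝ)
    (h : ∀ i ∈ s, CircleIntegrable (f i) c R) :
    (∮ ξ in C(c, R), ∑ i ∈ s, f i ξ) = ∑ i ∈ s, ∮ ξ in C(c, R), f i ξ := by
  simp only [circleIntegral]
  rw [← intervalIntegral.integral_finset_sum (fun i hi => (h i hi).out)]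
  congr 1
  ext θ
  rw [Finset.smul_sum]

/-- **Hermite integral formula for the polynomial interpolation error.**
If `O` is analytic (complex differentiable) on an open set `U` containing the closed disc
bounded by the circle `𝒞 = C(c, R)`, the finite interpolation set `X ⊂ ℂ` and the point
`z ∉ X` lie inside the circle, then the error of the Lagrange interpolant `I_X O` at `z` is
`O z − I_X O(z) = (1/2πi) ∮_{C(c,R)} [ℓ_X(z)/ℓ_X(ξ)] · O(ξ)/(ξ − z) dξ`,
where `ℓ_X(w) = ∏ x ∈ X, (w − x)` is the node polynomial. -/
theorem hermite_integral_formula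
    (X : Finset ℂ) (O : ℂ → ℂ) (z c : ℂ) (R : ℝ) (U : Set ℂ)
    (hR : 0 < R) (hU : IsOpen U) (hO : DifferentiableOn ℂ O U)
    (hdisc : Metric.closedBall c R ⊆ U)
    (hX : ∀ x ∈ X, x ∈ Metric.ball c R)
    (hz : z ∈ Metric.ball c R) (hzX : z ∉ X) :
    O z - (Lagrange.interpolate X id O).eval z
      = (2 * π * Complex.I)⁻¹ *
          ∮ ξ in C(c, R),
            ((∏ x ∈ X, (z - x)) / (∏ x ∈ X, (ξ - x))) * (O ξ / (ξ - z)) := by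
  classical
  have hR0 : (0 : ℝ) ≤ R := hR.le
  have hsub : Metric.sphere c R ⊆ Metric.closedBall c R := Metric.sphere_subset_closedBall
  have hOc : ContinuousOn O (Metric.closedBall c R) := (hO.continuousOn).mono hdisc
  have hne : ∀ w ∈ Metric.ball c R, ∀ ξ ∈ Metric.sphere c R, ξ ≠ w := by
    intro w hw ξ hξ h
    subst h
    rw [Metric.mem_sphere] at hξ
    rw [Metric.mem_ball] at hw
    exact absurd hξ (ne_of_lt hw)
  -- Cauchy integral formula
  have cauchy : ∀ w ∈ Metric.ball c R,
      (∮ ξ in C(c, R), (ξ - w)⁻¹ * O ξ) = (2 * π * Complex.I) * O w := by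
    intro w hw
    have h := Complex.two_pi_I_inv_smul_circleIntegral_sub_inv_smul_of_differentiable_on_off_countable
      (Set.countable_empty) hw hOc
      (fun x hx => hO.differentiableAt (hU.mem_nhds (hdisc (Metric.ball_subset_closedBall hx.1))))
    simp only [smul_eq_mul] at h
    rw [← h]
    rw [← mul_assoc, mul_inv_cancel₀ Complex.two_pi_I_ne_zero, one_mul]
  -- integrability
  have hint : ∀ w ∈ Metric.ball c R, CircleIntegrable (fun ξ => (ξ - w)⁻¹ * O ξ) c R := by
    intro w hw
    refine ContinuousOn.circleIntegrable hR0 (ContinuousOn.mul ?_ (hOc.mono hsub))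
    exact ContinuousOn.inv₀ (continuousOn_id.sub continuousOn_const)
      (fun ξ hξ => sub_ne_zero.2 (hne w hw ξ hξ))
  set L : ℂ → ℂ := fun x => (Lagrange.basis X id x).eval z with hL
  -- pointwise identity on the sphere
  have hcongr : Set.EqOn
      (fun ξ => ((∏ x ∈ X, (z - x)) / (∏ x ∈ X, (ξ - x))) * (O ξ / (ξ - z)))
      (fun ξ => (ξ - z)⁻¹ * O ξ - ∑ x ∈ X, L x * ((ξ - x)⁻¹ * O ξ))
      (Metric.sphere c R) := by
    intro ξ hξ
    have hξX : ∀ x ∈ X, ξ ≠ x := fun x hx => hne x (hX x hx) ξ hξ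
    have hξz : ξ ≠ z := hne z hz ξ hξ
    have key := hermite_pf_identity X z ξ hξX hξz
    simp only
    calc ((∏ x ∈ X, (z - x)) / (∏ x ∈ X, (ξ - x))) * (O ξ / (ξ - z))
        = ((∏ x ∈ X, (z - x)) / (∏ x ∈ X, (ξ - x)) * (ξ - z)⁻¹) * O ξ := by
          rw [div_eq_mul_inv]; ring
      _ = ((ξ - z)⁻¹ - ∑ x ∈ X, L x * (ξ - x)⁻¹) * O ξ := by rw [key]
      _ = (ξ - z)⁻¹ * O ξ - ∑ x ∈ X, L x * ((ξ - x)⁻¹ * O ξ) := by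
          rw [sub_mul, Finset.sum_mul]
          congr 1
          exact Finset.sum_congr rfl fun x hx => by ring
  rw [circleIntegral.integral_congr hR0 hcongr]
  have hint2 : ∀ x ∈ X, CircleIntegrable (fun ξ => L x * ((ξ - x)⁻¹ * O ξ)) c R := by
    intro x hx
    have := (hint x (hX x hx))
    refine ContinuousOn.circleIntegrable hR0 (ContinuousOn.mul continuousOn_const ?_)
    exact ContinuousOn.mul
      (ContinuousOn.inv₀ (continuousOn_id.sub continuousOn_const)
        (fun ξ hξ => sub_ne_zero.2 (hne x (hX x hx) ξ hξ)))
      (hOc.mono hsub)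
  have hintsum : CircleIntegrable (fun ξ => ∑ x ∈ X, L x * ((ξ - x)⁻¹ * O ξ)) c R := by
    refine ContinuousOn.circleIntegrable hR0 ?_
    apply continuousOn_finset_sum
    intro x hx
    exact ContinuousOn.mul continuousOn_const
      (ContinuousOn.mul
        (ContinuousOn.inv₀ (continuousOn_id.sub continuousOn_const)
          (fun ξ hξ => sub_ne_zero.2 (hne x (hX x hx) ξ hξ)))
        (hOc.mono hsub))
  rw [circleIntegral.integral_sub (hint z hz) hintsum,
    circleIntegral_finset_sum X _ c R hint2]
  have hx_int : ∀ x ∈ X, (∮ ξ in C(c, R), L x * ((ξ - x)⁻¹ * O ξ))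
      = L x * ((2 * π * Complex.I) * O x) := by
    intro x hx
    rw [circleIntegral.integral_const_mul, cauchy x (hX x hx)]
  rw [Finset.sum_congr rfl hx_int, cauchy z hz]
  have hinterp : (Lagrange.interpolate X id O).eval z = ∑ x ∈ X, O x * L x := by
    rw [Lagrange.interpolate_apply, Polynomial.eval_finset_sum]
    simp [hL]
  rw [hinterp]
  rw [mul_sub, ← mul_assoc, inv_mul_cancel₀ Complex.two_pi_I_ne_zero, one_mul,
    Finset.mul_sum]
  congr 1
  exact Finset.sum_congr rfl fun x hx => by
    field_simp [Complex.I_ne_zero, Complex.ofReal_ne_zero.mpr Real.pi_ne_zero]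
    try ring
end

section
/- Let T_N be an (N+1)×(N+1) matrix (over ℂ) and z ∈ ℂ with T_N − z invertible. Suppose d := dist(z, σ(T_N)) > 0 in the sense that ‖(T_N − z)^{-1}‖ ≤ 1/d, and suppose T_N is tridiagonal (so [(T_N)^n]_{ij} = 0 whenever |i−j| > n). Then for all i, j, |[(T_N − z)^{-1}]_{ij}| ≤ inf { ‖(x−z)^{-1} − P(x)‖_{L^∞(σ(T_N))} : P polynomial of degree ≤ |i−j|−1 }, provided T_N is additionally Hermitian so that ‖f(T_N)‖ = sup_{λ∈σ(T_N)} |f(λ)|. -/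
open Matrix

lemma aux_conj_mul {m : ℕ} (U : Matrix (Fin m) (Fin m) ℂ) (hU2 : star U * U = 1)
    (A B : Matrix (Fin m) (Fin m) ℂ) :
    (U * A * star U) * (U * B * star U) = U * (A * B) * star U := by
  simp only [mul_assoc]
  rw [← mul_assoc (star U) U, hU2, one_mul]

lemma aux_diag_sum {m : ℕ} (s : Finset ℕ) (d : ℕ → Fin m → ℂ) :
    ∑ n ∈ s, Matrix.diagonal (d n) = Matrix.diagonal (fun k => ∑ n ∈ s, d n k) := by
  ext a b
  by_cases h : a = b <;> simp [Matrix.sum_apply, Matrix.diagonal_apply, h]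

lemma aux_pow_banded {m : ℕ} (T : Matrix (Fin m) (Fin m) ℂ)
    (htri : ∀ i j : Fin m, 1 < Nat.dist (i : ℕ) (j : ℕ) → T i j = 0) :
    ∀ n : ℕ, ∀ i j : Fin m, n < Nat.dist (i : ℕ) (j : ℕ) → (T ^ n) i j = 0 := by
  intro n
  induction n with
  | zero =>
    intro i j h
    rw [pow_zero]
    apply Matrix.one_apply_ne
    intro e
    rw [e, Nat.dist_self] at h
    omega
  | succ n ih =>
    intro i j h
    rw [pow_succ, Matrix.mul_apply]
    apply Finset.sum_eq_zero
    intro k _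
    by_cases hk : n < Nat.dist (i : ℕ) (k : ℕ)
    · rw [ih i k hk, zero_mul]
    · have htr := Nat.dist.triangle_inequality (i : ℕ) (k : ℕ) (j : ℕ)
      have : 1 < Nat.dist (k : ℕ) (j : ℕ) := by omega
      rw [htri k j this, mul_zero]

lemma aux_entry_bound {m : ℕ} (U : Matrix (Fin (m + 1)) (Fin (m + 1)) ℂ)
    (hU : U * star U = 1) (g : Fin (m + 1) → ℂ) (C : ℝ)
    (hC : ∀ k, ‖g k‖ ≤ C) (i j : Fin (m + 1)) :
    ‖(U * Matrix.diagonal g * star U) i j‖ ≤ C := by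
  have hC0 : 0 ≤ C := le_trans (norm_nonneg _) (hC 0)
  have hrow : ∀ a : Fin (m + 1), ∑ k, ‖U a k‖ ^ 2 = 1 := by
    intro a
    have h1 : (U * star U) a a = 1 := by rw [hU]; simp
    rw [Matrix.mul_apply] at h1
    have h2 : ((∑ k, Complex.normSq (U a k) : ℝ) : ℂ) = (1 : ℂ) := by
      rw [← h1, Complex.ofReal_sum]
      apply Finset.sum_congr rfl
      intro k _
      rw [Matrix.star_apply, ← Complex.mul_conj]
      rfl
    have h3 : (∑ k, Complex.normSq (U a k) : ℝ) = 1 := by exact_mod_cast h2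
    rw [← h3]
    apply Finset.sum_congr rfl
    intro k _
    rw [Complex.sq_norm]
  have hentry : (U * Matrix.diagonal g * star U) i j
      = ∑ k, U i k * g k * star (U j k) := by
    rw [Matrix.mul_apply]
    apply Finset.sum_congr rfl
    intro k _
    rw [Matrix.mul_diagonal, Matrix.star_apply]
  rw [hentry]
  have hCS : ∑ k, ‖U i k‖ * ‖U j k‖ ≤ 1 := by
    have hsq := Finset.sum_mul_sq_le_sq_mul_sq Finset.univ
      (fun k => ‖U i k‖) (fun k => ‖U j k‖)
    rw [hrow i, hrow j, one_mul] at hsq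
    have hnn : 0 ≤ ∑ k, ‖U i k‖ * ‖U j k‖ :=
      Finset.sum_nonneg fun k _ => mul_nonneg (norm_nonneg _) (norm_nonneg _)
    nlinarith
  calc ‖∑ k, U i k * g k * star (U j k)‖
      ≤ ∑ k, ‖U i k * g k * star (U j k)‖ :=
        norm_sum_le _ _
    _ ≤ ∑ k, C * (‖U i k‖ * ‖U j k‖) := by
        apply Finset.sum_le_sum
        intro k _
        rw [norm_mul, norm_mul]
        have hstar : ‖star (U j k)‖ = ‖U j k‖ := norm_star _
        rw [hstar]
        calc ‖U i k‖ * ‖g k‖ * ‖U j k‖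
            ≤ ‖U i k‖ * C * ‖U j k‖ := by
              apply mul_le_mul_of_nonneg_right _ (norm_nonneg _)
              exact mul_le_mul_of_nonneg_left (hC k) (norm_nonneg _)
          _ = C * (‖U i k‖ * ‖U j k‖) := by ring
    _ = C * ∑ k, ‖U i k‖ * ‖U j k‖ := by rw [Finset.mul_sum]
    _ ≤ C * 1 := mul_le_mul_of_nonneg_left hCS hC0
    _ = C := mul_one C

/-- **Locality of resolvent entries of Hermitian tridiagonal matrices.** -/
theorem tridiagonal_resolvent_locality
    (N : ℕ) (T : Matrix (Fin (N + 1)) (Fin (N + 1)) ℂ)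
    (hherm : T.IsHermitian)
    (htri : ∀ i j : Fin (N + 1), 1 < Nat.dist (i : ℕ) (j : ℕ) → T i j = 0)
    (z : ℂ) (hz : z ∉ spectrum ℂ T) :
    ∀ i j : Fin (N + 1),
      ‖((T - z • (1 : Matrix (Fin (N + 1)) (Fin (N + 1)) ℂ))⁻¹) i j‖
        ≤ sInf {r : ℝ | ∃ P : Polynomial ℂ,
            P.degree < (Nat.dist (i : ℕ) (j : ℕ) : ℕ) ∧
            r = ⨆ μ ∈ spectrum ℂ T, ‖(μ - z)⁻¹ - P.eval μ‖} := by
  intro i j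
  set U : Matrix (Fin (N + 1)) (Fin (N + 1)) ℂ := ((hherm.eigenvectorUnitary : Matrix.unitaryGroup (Fin (N+1)) ℂ) : Matrix (Fin (N+1)) (Fin (N+1)) ℂ)
    with hUdef
  set ev : Fin (N + 1) → ℝ := hherm.eigenvalues with hevdef
  have hU1 : U * star U = 1 := Matrix.mem_unitaryGroup_iff.mp hherm.eigenvectorUnitary.2
  have hU2 : star U * U = 1 := Matrix.mem_unitaryGroup_iff'.mp hherm.eigenvectorUnitary.2
  have hspec : spectrum ℂ T = Set.range (fun k => (ev k : ℂ)) := by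
    conv_lhs => rw [hherm.spectral_theorem, Unitary.conjStarAlgAut_apply, Unitary.spectrum_star_right_conjugate]
    rw [spectrum_diagonal]
    ext x
    simp [Function.comp, hevdef]
  have hTdiag : T = U * Matrix.diagonal (fun k => (ev k : ℂ)) * star U := by
    conv_lhs => rw [hherm.spectral_theorem]
    rfl
  have hne : ∀ k, (ev k : ℂ) - z ≠ 0 := by
    intro k h
    apply hz
    rw [hspec]
    exact ⟨k, by rw [← sub_eq_zero]; exact h⟩
  have hpow : ∀ n : ℕ, T ^ n = U * Matrix.diagonal (fun k => (ev k : ℂ) ^ n) * star U := by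
    intro n
    induction n with
    | zero =>
      have h0 : (fun k : Fin (N + 1) => (ev k : ℂ) ^ 0) = fun _ => (1 : ℂ) := by
        funext k; rw [pow_zero]
      rw [pow_zero, h0, Matrix.diagonal_one, mul_one, hU1]
    | succ n ih =>
      rw [pow_succ, ih]
      conv_lhs => rw [hTdiag]
      rw [aux_conj_mul U hU2, Matrix.diagonal_mul_diagonal]
      have h0 : (fun i : Fin (N + 1) => (ev i : ℂ) ^ n * (ev i : ℂ))
          = fun k => (ev k : ℂ) ^ (n + 1) := by
        funext k; exact (pow_succ _ n).symm
      rw [h0]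
  have hTz : T - z • (1 : Matrix (Fin (N + 1)) (Fin (N + 1)) ℂ)
      = U * Matrix.diagonal (fun k => (ev k : ℂ) - z) * star U := by
    have hz1 : z • (1 : Matrix (Fin (N + 1)) (Fin (N + 1)) ℂ)
        = U * Matrix.diagonal (fun _ => z) * star U := by
      have h0 : Matrix.diagonal (fun _ : Fin (N + 1) => z) = z • (1 : Matrix _ _ ℂ) := by
        ext a b
        by_cases h : a = b <;> simp [Matrix.diagonal_apply, h, Matrix.one_apply]
      rw [h0, Matrix.mul_smul, Matrix.smul_mul, mul_one, hU1]
    conv_lhs => rw [hTdiag, hz1]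
    rw [← Matrix.sub_mul, ← Matrix.mul_sub, ← Matrix.diagonal_sub]
  have hres : (T - z • (1 : Matrix (Fin (N + 1)) (Fin (N + 1)) ℂ))⁻¹
      = U * Matrix.diagonal (fun k => ((ev k : ℂ) - z)⁻¹) * star U := by
    apply Matrix.inv_eq_right_inv
    rw [hTz, aux_conj_mul U hU2, Matrix.diagonal_mul_diagonal]
    have : (fun k => ((ev k : ℂ) - z) * ((ev k : ℂ) - z)⁻¹) = fun _ => (1 : ℂ) := by
      funext k; exact mul_inv_cancel₀ (hne k)
    rw [this, Matrix.diagonal_one, mul_one, hU1]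
  apply le_csInf
  · refine ⟨_, 0, ?_, rfl⟩
    rw [Polynomial.degree_zero]
    exact WithBot.bot_lt_coe _
  rintro r ⟨P, hdeg, rfl⟩
  -- the polynomial applied to T has zero (i,j) entry
  have hPentry : (∑ n ∈ Finset.range (P.natDegree + 1), P.coeff n • T ^ n) i j = 0 := by
    rw [Matrix.sum_apply]
    apply Finset.sum_eq_zero
    intro n hn
    by_cases hP : P = 0
    · simp [hP]
    · have hnd : n < Nat.dist (i : ℕ) (j : ℕ) :=
        lt_of_lt_of_le (Finset.mem_range.mp hn)
          ((Polynomial.natDegree_lt_iff_degree_lt hP).mpr hdeg)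
      rw [Matrix.smul_apply, aux_pow_banded T htri n i j hnd, smul_zero]
  have hPsum : (∑ n ∈ Finset.range (P.natDegree + 1), P.coeff n • T ^ n)
      = U * Matrix.diagonal (fun k => P.eval ((ev k : ℂ))) * star U := by
    have h1 : ∀ n ∈ Finset.range (P.natDegree + 1),
        P.coeff n • T ^ n
          = U * Matrix.diagonal (fun k => P.coeff n * (ev k : ℂ) ^ n) * star U := by
      intro n _
      have hfun : (P.coeff n • fun k : Fin (N + 1) => ((ev k : ℂ)) ^ n)
          = fun k => P.coeff n * ((ev k : ℂ)) ^ n := by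
        funext k'; simp
      rw [hpow n, ← smul_mul_assoc, ← mul_smul_comm, ← Matrix.diagonal_smul, hfun]
    rw [Finset.sum_congr rfl h1, ← Finset.sum_mul, ← Finset.mul_sum, aux_diag_sum]
    have hfun : (fun k : Fin (N + 1) => ∑ n ∈ Finset.range (P.natDegree + 1),
          P.coeff n * ((ev k : ℂ)) ^ n) = fun k => P.eval ((ev k : ℂ)) := by
      funext k'
      rw [Polynomial.eval_eq_sum_range]
    rw [hfun]
  -- the resolvent entry equals the entry of the difference
  have hdiff : (T - z • (1 : Matrix (Fin (N + 1)) (Fin (N + 1)) ℂ))⁻¹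
        - (∑ n ∈ Finset.range (P.natDegree + 1), P.coeff n • T ^ n)
      = U * Matrix.diagonal
          (fun k => ((ev k : ℂ) - z)⁻¹ - P.eval ((ev k : ℂ))) * star U := by
    rw [hres, hPsum, ← Matrix.sub_mul, ← Matrix.mul_sub, ← Matrix.diagonal_sub]
  have hentry : (T - z • (1 : Matrix (Fin (N + 1)) (Fin (N + 1)) ℂ))⁻¹ i j
      = (U * Matrix.diagonal
          (fun k => ((ev k : ℂ) - z)⁻¹ - P.eval ((ev k : ℂ))) * star U) i j := by
    have := congrArg (fun M : Matrix (Fin (N + 1)) (Fin (N + 1)) ℂ => M i j) hdiff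
    simp only [Matrix.sub_apply, hPentry, sub_zero] at this
    exact this
  rw [hentry]
  apply aux_entry_bound U hU1 _ _ _ i j
  -- bound each eigenvalue entry by the sup over the spectrum
  intro k
  set F : ℂ → ℝ := fun μ => ‖(μ - z)⁻¹ - P.eval μ‖ with hF
  have hmem : ((ev k : ℂ)) ∈ spectrum ℂ T := by rw [hspec]; exact ⟨k, rfl⟩
  have hbdd : BddAbove (Set.range fun μ => ⨆ _ : μ ∈ spectrum ℂ T, F μ) := by
    refine ⟨max 0 (Finset.univ.sup' Finset.univ_nonempty (fun k' => F ((ev k' : ℂ)))), ?_⟩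
    rintro x ⟨μ, rfl⟩
    dsimp only
    by_cases h : μ ∈ spectrum ℂ T
    · rw [ciSup_pos h]
      rw [hspec] at h
      obtain ⟨k', rfl⟩ := h
      show F ((ev k' : ℂ)) ≤ _
      exact le_max_of_le_right (Finset.le_sup' (fun k'' => F ((ev k'' : ℂ))) (Finset.mem_univ k'))
    · haveI : IsEmpty (μ ∈ spectrum ℂ T) := ⟨h⟩
      rw [Real.iSup_of_isEmpty]
      exact le_max_left _ _
  have h1 : (⨆ _ : ((ev k : ℂ)) ∈ spectrum ℂ T, F ((ev k : ℂ))) = F ((ev k : ℂ)) :=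
    ciSup_pos hmem
  show F ((ev k : ℂ)) ≤ ⨆ μ ∈ spectrum ℂ T, F μ
  rw [← h1]
  exact le_ciSup hbdd _
end
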